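/- Let q be a σ-twisted multiline queue (a tuple of queues q_1,...,q_{ℓ−1} where |q_i| = p_{σ(i)}(m)) of type m with p_ℓ(m) = n. Then the type of the word q(1^n) := q_{ℓ−1}(⋯ q_1(1^n) ⋯) equals m. -/

import Mathlib

open scoped BigOperators Classical

namespace MLQ

/-- Words of length `n` over the positive integers (letters are natural numbers,
with `0` unused). Sites are elements of `Fin n`, thought of cyclically. -/
abbrev Word (n : ℕ) := Fin n → ℕ

variable {n : ℕ}

section Cyclic

variable [NeZero n]

/-- the site `s` steps (cyclically) to the right of `i` -/
def shiftR (i : Fin n) (s : ℕ) : Fin n :=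
  ⟨(i.val + s) % n, Nat.mod_lt _ (Nat.pos_of_ne_zero (NeZero.ne n))⟩

/-- the site `s` steps (cyclically) to the left of `i` -/
def shiftL (i : Fin n) (s : ℕ) : Fin n :=
  ⟨(i.val + n - s % n) % n, Nat.mod_lt _ (Nat.pos_of_ne_zero (NeZero.ne n))⟩

/-- number of steps to go (cyclically) right from `i` to `j` -/
def cdistR (i j : Fin n) : ℕ := (j.val + n - i.val) % n

/-- number of steps to go (cyclically) left from `i` to `j` -/
def cdistL (i j : Fin n) : ℕ := (i.val + n - j.val) % n

/-- first site of `s` weakly to the right (cyclically) of `i` -/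
noncomputable def firstRight (i : Fin n) (s : Finset (Fin n)) (h : s.Nonempty) : Fin n :=
  shiftR i ((s.image (cdistR i)).min' (h.image _))

/-- first site of `s` weakly to the left (cyclically) of `i` -/
noncomputable def firstLeft (i : Fin n) (s : Finset (Fin n)) (h : s.Nonempty) : Fin n :=
  shiftL i ((s.image (cdistL i)).min' (h.image _))

/-- One step of Phase II of the queue algorithm: the state consists of the set of
still-unset sites of the queue together with the partial output word; processing
the letter at site `σ p`, it is placed (unchanged) on the first unset queue site
weakly to the right of `σ p`. -/
noncomputable def step2 (u : Word n) (σ : Equiv.Perm (Fin n))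
    (st : Finset (Fin n) × Word n) (p : Fin n) : Finset (Fin n) × Word n :=
  if h : st.1.Nonempty then
    let j := firstRight (σ p) st.1 h
    (st.1.erase j, Function.update st.2 j (u (σ p)))
  else st

/-- One step of Phase I of the queue algorithm: processing the letter at site `σ p`,
the letter `u (σ p) + 1` is placed on the first unset non-queue site weakly to the
left of `σ p`. -/
noncomputable def step1 (u : Word n) (σ : Equiv.Perm (Fin n))
    (st : Finset (Fin n) × Word n) (p : Fin n) : Finset (Fin n) × Word n :=
  if h : st.1.Nonempty then
    let j := firstLeft (σ p) st.1 h
    (st.1.erase j, Function.update st.2 j (u (σ p) + 1))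
  else st

/-- The two-phase queue algorithm computing `q(u)`, using the ordering permutation `σ`
(so the letters are processed in the order `u (σ 0), u (σ 1), …`): Phase II processes
the `|q|` smallest letters in increasing order, Phase I processes the remaining
letters in decreasing order. -/
noncomputable def queueActWith (q : Finset (Fin n)) (σ : Equiv.Perm (Fin n))
    (u : Word n) : Word n :=
  let s2 := ((List.finRange n).take q.card).foldl (step2 u σ) (q, fun _ => 0)
  let s1 := (((List.finRange n).drop q.card).reverse).foldl (step1 u σ) (qᶜ, s2.2)
  s1.2

/-- `σ` is a valid ordering permutation for the word `u`. -/
def IsSorting (u : Word n) (σ : Equiv.Perm (Fin n)) : Prop := Monotone (u ∘ σ)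

/-- The action `q(u)` of a queue `q` on a word `u`, using the canonical sorting
permutation. -/
noncomputable def act (q : Finset (Fin n)) (u : Word n) : Word n :=
  queueActWith q (Tuple.sort u) u

/-- The action of a tuple of queues `(q_1, …, q_k)` on a word (first `q_1`, then `q_2`, …). -/
noncomputable def mlqAct {k : ℕ} (qs : Fin k → Finset (Fin n)) (u : Word n) : Word n :=
  (List.ofFn qs).foldl (fun w q => act q w) u

end Cyclic

/-- the type of a word: `typeOf u i` is the number of occurrences of the letter `i`. -/
def typeOf (u : Word n) : ℕ → ℕ := fun i => (Finset.univ.filter (fun p => u p = i)).card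

/-- partial sums `p_i(m) = m_1 + ⋯ + m_i` of a type -/
def psum (m : ℕ → ℕ) (i : ℕ) : ℕ := ∑ j ∈ Finset.Icc 1 i, m j

/-- number of classes of a type: the largest `i` with `m i ≠ 0` -/
noncomputable def classes (m : ℕ → ℕ) : ℕ := sSup {i | m i ≠ 0}

/-- a packed word: all classes `1, …, ℓ` occur, where `ℓ` is the number of classes -/
def PackedWord (u : Word n) : Prop :=
  (∀ p, 1 ≤ u p) ∧ ∀ j, 1 ≤ j → j ≤ classes (typeOf u) → typeOf u j ≠ 0

/-- merging classes `i` and `i+1` in a word: all letters `> i` are decremented -/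
def mergeWord (i : ℕ) (u : Word n) : Word n := fun p => if i < u p then u p - 1 else u p

/-- merging classes `i` and `i+1` in a type -/
def mergeType (i : ℕ) (m : ℕ → ℕ) : ℕ → ℕ := fun j =>
  if j < i then m j else if j = i then m i + m (i + 1) else m (j + 1)

/-- `∨^(k)`: decrement all but the `k` smallest letters of a word (meaningful when
`k` is a partial sum of the type of the word). -/
def vee (k : ℕ) (u : Word n) : Word n := fun p =>
  if (Finset.univ.filter (fun q => u q ≤ u p)).card ≤ k then u p else u p - 1

/-- iterated merge `∨_T` (the merges `∨_t` are applied for `t ∈ T` in decreasing order) -/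
def mergeWordT (T : Finset ℕ) (u : Word n) : Word n :=
  (T.sort (· ≤ ·)).foldr mergeWord u

/-- iterated merge `∨_T` on types -/
def mergeTypeT (T : Finset ℕ) (m : ℕ → ℕ) : ℕ → ℕ :=
  (T.sort (· ≤ ·)).foldr mergeType m

/-- the weight of a queue, `∏_{j ∈ q} x_j` -/
noncomputable def qwt (q : Finset (Fin n)) : MvPolynomial (Fin n) ℤ :=
  ∏ j ∈ q, MvPolynomial.X j

/-- the `σ`-twisted spectral weight `⟨u⟩_σ` of a word `u`, with respect to a type `m`
with `k + 1` classes: the sum of the weights of all `σ`-twisted multiline queues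
`(q_1, …, q_k)` of type `m` (i.e. `|q_i| = p_{σ(i)}(m)`) with `u = q(1^n)`. -/
noncomputable def swt [NeZero n] (k : ℕ) (m : ℕ → ℕ) (σ : Equiv.Perm (Fin k))
    (u : Word n) : MvPolynomial (Fin n) ℤ :=
  ∑ qs ∈ Finset.univ.filter (fun qs : Fin k → Finset (Fin n) =>
      (∀ i, (qs i).card = psum m ((σ i : ℕ) + 1)) ∧ mlqAct qs (fun _ => 1) = u),
    ∏ i, qwt (qs i)

/-- the (ordinary) spectral weight `⟨u⟩` of a packed word -/
noncomputable def spec [NeZero n] (u : Word n) : MvPolynomial (Fin n) ℤ :=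
  swt (classes (typeOf u) - 1) (typeOf u) (Equiv.refl _) u

/-- the elementary symmetric polynomial `e_k(x_1, …, x_n)` -/
noncomputable def esym (n k : ℕ) : MvPolynomial (Fin n) ℤ :=
  ∑ t ∈ Finset.powersetCard k (Finset.univ : Finset (Fin n)), ∏ j ∈ t, MvPolynomial.X j

/-- the Gale order `A ⪰ B`: same cardinality, and the `k`-th largest element of `A`
is at least the `k`-th largest element of `B`, for every `k` -/
def Dom (A B : Finset ℕ) : Prop :=
  A.card = B.card ∧ ∀ k < A.card,
    (B.sort (· ≤ ·)).reverse.getD k 0 ≤ (A.sort (· ≤ ·)).reverse.getD k 0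

/-- `A ≫ B`: every element of `A` exceeds every element of `B` -/
def Gg (A B : Finset ℕ) : Prop := ∀ a ∈ A, ∀ b ∈ B, b < a

/-- a word is weakly decreasing up to level `t`: any two sites `p < q` with
`u q ≤ t` satisfy `u p ≥ u q` -/
def WDUpTo (t : ℕ) (u : Word n) : Prop :=
  ∀ p q : Fin n, p < q → u q ≤ t → u q ≤ u p

section Dual

variable [NeZero n]

/-- the cyclic interval `{i, i+1, …, i+t}` -/
def cycInterval (i : Fin n) (t : ℕ) : Finset (Fin n) :=
  (Finset.range (t + 1)).image (shiftR i)

/-- the cyclic interval starting at `i` of length `t` is balanced for the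
configuration `(q₁, q₂)` -/
def BalancedInterval (q1 q2 : Finset (Fin n)) (i : Fin n) (t : ℕ) : Prop :=
  (cycInterval i t ∩ q1).card = (cycInterval i t ∩ q2).card ∧
  ∀ l ≤ t, (cycInterval i l ∩ q2).card ≤ (cycInterval i l ∩ q1).card

/-- a site is balanced if it lies in some balanced interval; equivalently, its
parenthesis (if any) is matched in the cyclic parenthesis-matching of the
configuration -/
def BalancedSite (q1 q2 : Finset (Fin n)) (j : Fin n) : Prop :=
  ∃ i t, t < n ∧ BalancedInterval q1 q2 i t ∧ j ∈ cycInterval i t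

/-- the dual configuration: balanced sites keep their memberships, unbalanced
sites swap their memberships between the two queues -/
noncomputable def dualPair (q1 q2 : Finset (Fin n)) : Finset (Fin n) × Finset (Fin n) :=
  (Finset.univ.filter (fun j => if BalancedSite q1 q2 j then j ∈ q1 else j ∈ q2),
   Finset.univ.filter (fun j => if BalancedSite q1 q2 j then j ∈ q2 else j ∈ q1))

/-- the operator `s_i` on tuples of queues, replacing the (0-indexed) adjacent pair
`(q_i, q_{i+1})` by its dual configuration -/
noncomputable def sOp {k : ℕ} (i : ℕ) (qs : Fin k → Finset (Fin n)) :
    Fin k → Finset (Fin n) := fun j =>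
  if h : i + 1 < k then
    (if j.val = i then (dualPair (qs ⟨i, by omega⟩) (qs ⟨i + 1, h⟩)).1
     else if j.val = i + 1 then (dualPair (qs ⟨i, by omega⟩) (qs ⟨i + 1, h⟩)).2
     else qs j)
  else qs j

end Dual

/-!
Write `c_u(j)` for the number of letters `≤ j` of `u`. As a multiset of letters, an `r`-queue
keeps the `r` smallest letters of `u` and raises the others by one, so
`c_{q(u)}(j + 1) = max (c_u j) (min r (c_u (j + 1)))`: the value `r` is inserted into the
increasing sequence `c_u`. Hence if `c_u = P ∘ nth S` for a monotone `P` and a set `S ∋ 0`,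
a queue of size `P a` with `a ∉ S` gives `c_{q(u)} = P ∘ nth (S ∪ {a})`, whatever the order of
the insertions. For `1^n` we have `c = p(m) ∘ nth ({0} ∪ [ℓ, ∞))`, and the sizes `p_{σ(i)}(m)`
insert `1, …, ℓ - 1`, so at the end `c = p(m)`, which determines the type `m`.
-/

open Finset

lemma foldl_erase_update {α β γ : Type*} [DecidableEq α]
    (step : Finset α × (α → β) → γ → Finset α × (α → β)) (val : γ → β)
    (hstep : ∀ s w c, s.Nonempty →
      ∃ a ∈ s, step (s, w) c = (s.erase a, Function.update w a (val c)))
    (L : List γ) (s : Finset α) (w : α → β) (hL : L.length = #s) :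
    (∀ a ∉ s, (L.foldl step (s, w)).2 a = w a) ∧
      s.val.map (L.foldl step (s, w)).2 = (L : Multiset γ).map val := by
  induction L generalizing s w with
  | nil => simp [card_eq_zero.mp hL.symm]
  | cons c L ih =>
    rw [List.length_cons] at hL
    obtain ⟨a, ha, hstep⟩ := hstep s w c (card_pos.mp (by omega))
    obtain ⟨hout, hin⟩ := ih (s.erase a) (Function.update w a (val c))
      (by rw [card_erase_of_mem ha]; omega)
    rw [List.foldl_cons, hstep]
    refine ⟨fun b hb => ?_, ?_⟩
    · rw [hout b (fun h => hb (mem_of_mem_erase h)),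
        Function.update_of_ne (by rintro rfl; exact hb ha)]
    · have hs : s.val = a ::ₘ (s.erase a).val := by rw [erase_val, Multiset.cons_erase ha]
      rw [hs, Multiset.map_cons, hout a (notMem_erase a s), Function.update_self, hin]
      simp

lemma map_take_add_map_drop_finRange {β : Type*} (k : ℕ) (f g : Fin n → β) :
    ((List.finRange n).take k : Multiset (Fin n)).map f +
        ((List.finRange n).drop k : Multiset (Fin n)).map g =
      univ.val.map (fun p => if p.val < k then f p else g p) := by
  rw [val_univ_fin, ← List.take_append_drop k (List.finRange n), ← Multiset.coe_add,
    Multiset.map_add, List.take_append_drop]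
  congr 1 <;> refine Multiset.map_congr rfl fun p hp => ?_
  · obtain ⟨i, hi, rfl⟩ := List.mem_take_iff_getElem.mp hp
    simp only [List.length_finRange, lt_min_iff] at hi
    simp [hi.1]
  · obtain ⟨i, hi, rfl⟩ := List.mem_drop_iff_getElem.mp hp
    simp

lemma card_filter_eq_of_map_eq {α β : Type*} [Fintype α] {f g : α → β}
    (h : univ.val.map f = univ.val.map g) (P : β → Prop) [DecidablePred P] :
    #{a | P (f a)} = #{a | P (g a)} := by
  have key (w : α → β) : #{a | P (w a)} = (univ.val.map w).countP P := by
    rw [Multiset.countP_map, card_def, filter_val]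
  rw [key, key, h]

lemma card_filter_comp_perm {α : Type*} [Fintype α] (τ : Equiv.Perm α) (P : α → Prop)
    [DecidablePred P] : #{a | P (τ a)} = #{a | P a} :=
  card_equiv τ (by simp)

lemma val_lt_card_filter_iff {v : Fin n → ℕ} (hv : Monotone v) {R : ℕ → Prop}
    [DecidablePred R] (hR : ∀ x y, x ≤ y → R y → R x) (p : Fin n) :
    p.val < #{p | R (v p)} ↔ R (v p) :=
  Fin.lt_card_filter_univ_iff_apply_of_imp _ fun _ _ hle h => hR _ _ (hv hle) h

lemma count_mem_insert {s : Set ℕ} {a : ℕ} (ha : a ∉ s) (x : ℕ) :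
    Nat.count (· ∈ insert a s) x = Nat.count (· ∈ s) x + if a < x then 1 else 0 := by
  induction x with
  | zero => simp
  | succ x ih =>
    rw [Nat.count_succ, Nat.count_succ, ih]
    by_cases hx : x = a
    · subst hx
      simp [ha]
    · simp only [Set.mem_insert_iff, hx, false_or]
      split_ifs <;> omega

lemma nth_insert_succ {s : Set ℕ} (hs : s.Infinite) {a : ℕ} (ha : a ∉ s) (j : ℕ) :
    Nat.nth (· ∈ insert a s) (j + 1) =
      max (Nat.nth (· ∈ s) j) (min a (Nat.nth (· ∈ s) (j + 1))) := by
  refine eq_of_forall_le_iff fun x => ?_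
  rw [← Nat.count_le_iff_le_nth (p := (· ∈ insert a s)) (hs.mono (Set.subset_insert a s)),
    le_max_iff, le_min_iff, ← Nat.count_le_iff_le_nth (p := (· ∈ s)) hs,
    ← Nat.count_le_iff_le_nth (p := (· ∈ s)) hs, count_mem_insert ha]
  split_ifs <;> omega

lemma psum_mono (m : ℕ → ℕ) : Monotone (psum m) := fun _ _ h =>
  sum_le_sum_of_subset (Icc_subset_Icc_right h)

lemma psum_zero (m : ℕ → ℕ) : psum m 0 = 0 := by
  simp [psum]

lemma psum_succ (m : ℕ → ℕ) (j : ℕ) : psum m (j + 1) = psum m j + m (j + 1) :=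
  sum_Icc_succ_top (by omega) m

lemma psum_eq_of_le {m : ℕ → ℕ} {ℓ : ℕ} (htop : ∀ j, ℓ < j → m j = 0) {j : ℕ}
    (hj : ℓ ≤ j) : psum m j = psum m ℓ :=
  (sum_subset (Icc_subset_Icc_right hj) fun x hx hx' => by
    simp only [mem_Icc] at hx hx'
    exact htop x (by omega)).symm

def cumType (u : Word n) (j : ℕ) : ℕ := #{p | u p ≤ j}

lemma cumType_zero (u : Word n) : cumType u 0 = typeOf u 0 := by
  simp [cumType, typeOf]

lemma cumType_succ (u : Word n) (j : ℕ) :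
    cumType u (j + 1) = cumType u j + typeOf u (j + 1) := by
  rw [cumType, cumType, typeOf,
    ← card_union_of_disjoint (disjoint_filter.mpr fun _ _ h => by omega), ← filter_or]
  congr 1
  ext p
  simp only [mem_filter, mem_univ, true_and]
  omega

lemma typeOf_eq_of_cumType_eq_psum {u : Word n} {m : ℕ → ℕ} (hm0 : m 0 = 0)
    (h : ∀ j, cumType u j = psum m j) : typeOf u = m := by
  funext j
  cases j with
  | zero => rw [← cumType_zero, h, psum_zero, hm0]
  | succ j =>
    have := cumType_succ u j
    rw [h, h, psum_succ] at this
    omega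

lemma cumType_one_eq_nth {P : ℕ → ℕ} (hP0 : P 0 = 0) {ℓ : ℕ} (hP : ∀ j, ℓ ≤ j → P j = n)
    (j : ℕ) :
    cumType (fun _ => 1 : Word n) j = P (Nat.nth (· ∈ insert 0 (Set.Ici ℓ)) j) := by
  set p : ℕ → Prop := (· ∈ insert 0 (Set.Ici ℓ))
  have hinf : (Set.ofPred p).Infinite := (Set.Ici_infinite ℓ).mono (Set.subset_insert _ _)
  have hp0 : Nat.nth p 0 = 0 := Nat.nth_zero_of_zero (Set.mem_insert 0 _)
  cases j with
  | zero => simp [cumType, hp0, hP0]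
  | succ j =>
    have hpos : 0 < Nat.nth p (j + 1) := hp0 ▸ Nat.nth_strictMono hinf (Nat.succ_pos j)
    rcases Nat.nth_mem_of_infinite hinf (j + 1) with h | h
    · omega
    · rw [hP _ h]
      simp [cumType]

section Queue

variable [NeZero n]

lemma shiftR_cdistR (i j : Fin n) : shiftR i (cdistR i j) = j := by
  have hj := j.isLt
  ext
  change (i.val + (j.val + n - i.val) % n) % n = j.val
  rw [Nat.add_mod_mod, show i.val + (j.val + n - i.val) = j.val + n by omega,
    Nat.add_mod_right, Nat.mod_eq_of_lt hj]

lemma shiftL_cdistL (i j : Fin n) : shiftL i (cdistL i j) = j := by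
  have hi := i.isLt
  have hj := j.isLt
  ext
  change (i.val + n - ((i.val + n - j.val) % n) % n) % n = j.val
  rw [Nat.mod_mod_of_dvd _ dvd_rfl]
  rcases le_or_gt j.val i.val with h | h
  · rw [show i.val + n - j.val = i.val - j.val + n by omega, Nat.add_mod_right,
      Nat.mod_eq_of_lt (show i.val - j.val < n by omega),
      show i.val + n - (i.val - j.val) = j.val + n by omega, Nat.add_mod_right,
      Nat.mod_eq_of_lt hj]
  · rw [Nat.mod_eq_of_lt (show i.val + n - j.val < n by omega),
      show i.val + n - (i.val + n - j.val) = j.val by omega, Nat.mod_eq_of_lt hj]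

lemma firstRight_mem (i : Fin n) (s : Finset (Fin n)) (h : s.Nonempty) :
    firstRight i s h ∈ s := by
  obtain ⟨j, hj, hje⟩ := mem_image.mp ((s.image (cdistR i)).min'_mem (h.image _))
  rwa [firstRight, ← hje, shiftR_cdistR]

lemma firstLeft_mem (i : Fin n) (s : Finset (Fin n)) (h : s.Nonempty) :
    firstLeft i s h ∈ s := by
  obtain ⟨j, hj, hje⟩ := mem_image.mp ((s.image (cdistL i)).min'_mem (h.image _))
  rwa [firstLeft, ← hje, shiftL_cdistL]

lemma map_act (q : Finset (Fin n)) (u : Word n) :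
    univ.val.map (act q u) = univ.val.map
      (fun p => if p.val < #q then u (Tuple.sort u p) else u (Tuple.sort u p) + 1) := by
  set τ := Tuple.sort u
  obtain ⟨-, hphase2⟩ := foldl_erase_update (step2 u τ) (fun p => u (τ p))
    (fun s w p hs =>
      ⟨firstRight (τ p) s hs, firstRight_mem _ s hs, by simp [step2, dif_pos hs]⟩)
    ((List.finRange n).take #q) q (fun _ => 0) (by simpa using card_le_univ q)
  set s2 := ((List.finRange n).take #q).foldl (step2 u τ) (q, fun _ => 0)
  obtain ⟨hkeep, hphase1⟩ := foldl_erase_update (step1 u τ) (fun p => u (τ p) + 1)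
    (fun s w p hs =>
      ⟨firstLeft (τ p) s hs, firstLeft_mem _ s hs, by simp [step1, dif_pos hs]⟩)
    ((List.finRange n).drop #q).reverse qᶜ s2.2 (by simp [card_compl])
  change univ.val.map (List.foldl (step1 u τ) (qᶜ, s2.2) _).2 = _
  have hsplit : univ.val = q.val + qᶜ.val := by
    rw [← disjUnion_val (h := disjoint_compl_right), disjUnion_eq_union, union_compl]
  rw [← map_take_add_map_drop_finRange, hsplit, Multiset.map_add, hphase1, Multiset.coe_reverse,
    ← hphase2]
  congr 1
  exact Multiset.map_congr rfl fun p hp => hkeep p (by simpa using hp)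

lemma cumType_act (q : Finset (Fin n)) (u : Word n) (j : ℕ) :
    cumType (act q u) j = max #{p | u p < j} (min #q (cumType u j)) := by
  set τ := Tuple.sort u
  have hv : Monotone (fun p => u (τ p)) := Tuple.monotone_sort u
  have hle (p : Fin n) : u (τ p) ≤ j ↔ p.val < cumType u j := by
    rw [cumType, ← card_filter_comp_perm τ, val_lt_card_filter_iff hv (fun _ _ => le_trans)]
  have hlt (p : Fin n) : u (τ p) < j ↔ p.val < #{p | u p < j} := by
    rw [← card_filter_comp_perm τ, val_lt_card_filter_iff hv (fun _ _ => lt_of_le_of_lt)]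
  have hmono : #{p | u p < j} ≤ cumType u j :=
    card_le_card (monotone_filter_right _ fun _ _ => le_of_lt)
  have hbound : cumType u j ≤ n := (card_le_univ _).trans (by simp)
  calc cumType (act q u) j
      = #{p : Fin n | (if p.val < #q then u (τ p) else u (τ p) + 1) ≤ j} :=
        card_filter_eq_of_map_eq (map_act q u) (· ≤ j)
    _ = #{p : Fin n | p.val < max #{p | u p < j} (min #q (cumType u j))} := by
        congr 1
        ext p
        have := hle p
        have := hlt p
        simp only [mem_filter, mem_univ, true_and]
        split_ifs <;> omega
    _ = max #{p | u p < j} (min #q (cumType u j)) := by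
        rw [Fin.card_filter_val_lt]
        omega

lemma cumType_act_of_eq_nth {P : ℕ → ℕ} (hP : Monotone P) (hP0 : P 0 = 0) {s : Set ℕ}
    (hs : s.Infinite) (hs0 : 0 ∈ s) {a : ℕ} (ha : a ∉ s) {q : Finset (Fin n)} (hq : #q = P a)
    {u : Word n} (hu : ∀ j, cumType u j = P (Nat.nth (· ∈ s) j)) (j : ℕ) :
    cumType (act q u) j = P (Nat.nth (· ∈ insert a s) j) := by
  rw [cumType_act]
  cases j with
  | zero =>
    rw [Nat.nth_zero_of_zero (Set.mem_insert_of_mem a hs0), hu, Nat.nth_zero_of_zero hs0, hP0]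
    simp
  | succ j =>
    have hstrict : #{p | u p < j + 1} = cumType u j := by simp only [Nat.lt_succ_iff]; rfl
    rw [nth_insert_succ hs ha, hP.map_max, hP.map_min, hstrict, hq, hu, hu]

lemma mlqAct_succ {k : ℕ} (qs : Fin (k + 1) → Finset (Fin n)) (u : Word n) :
    mlqAct qs u = act (qs (Fin.last k)) (mlqAct (fun i => qs i.castSucc) u) := by
  rw [mlqAct, mlqAct, List.ofFn_succ', List.concat_eq_append, List.foldl_append]
  rfl

lemma cumType_mlqAct_of_eq_nth {P : ℕ → ℕ} (hP : Monotone P) (hP0 : P 0 = 0) {s : Set ℕ}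
    (hs : s.Infinite) (hs0 : 0 ∈ s) {u : Word n}
    (hu : ∀ j, cumType u j = P (Nat.nth (· ∈ s) j)) {k : ℕ} (qs : Fin k → Finset (Fin n))
    (a : Fin k → ℕ) (ha : Function.Injective a) (has : ∀ i, a i ∉ s)
    (hqs : ∀ i, #(qs i) = P (a i)) (j : ℕ) :
    cumType (mlqAct qs u) j = P (Nat.nth (· ∈ s ∪ Set.range a) j) := by
  induction k generalizing j with
  | zero => simp [mlqAct, hu]
  | succ k ih =>
    have hrange : s ∪ Set.range a =
        insert (a (Fin.last k)) (s ∪ Set.range (a ∘ Fin.castSucc)) := by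
      ext x
      simp only [Set.mem_union, Set.mem_insert_iff, Set.mem_range, Function.comp_apply,
        Fin.exists_fin_succ' (P := fun i => a i = x)]
      tauto
    have hlast : a (Fin.last k) ∉ s ∪ Set.range (a ∘ Fin.castSucc) := by
      rintro (h | ⟨i, hi⟩)
      · exact has _ h
      · exact (Fin.castSucc_lt_last i).ne (ha hi)
    rw [mlqAct_succ, hrange]
    exact cumType_act_of_eq_nth hP hP0 (hs.mono Set.subset_union_left) (Or.inl hs0) hlast
      (hqs _) (ih (fun i => qs i.castSucc) (a ∘ Fin.castSucc)
        (ha.comp (Fin.castSucc_injective k)) (fun _ => has _) (fun _ => hqs _)) j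

end Queue

theorem mlq_type_general {n ℓ : ℕ} [NeZero n] (m : ℕ → ℕ)
    (hm0 : m 0 = 0) (htop : ∀ j, ℓ < j → m j = 0) (hn : psum m ℓ = n)
    (σ : Equiv.Perm (Fin (ℓ - 1))) (qs : Fin (ℓ - 1) → Finset (Fin n))
    (hqs : ∀ i, (qs i).card = psum m ((σ i : ℕ) + 1)) :
    typeOf (mlqAct qs (fun _ => 1)) = m := by
  set s₀ : Set ℕ := insert 0 (Set.Ici ℓ)
  have hs₀ : s₀.Infinite := (Set.Ici_infinite ℓ).mono (Set.subset_insert _ _)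
  have hinj : Function.Injective fun i : Fin (ℓ - 1) => (σ i : ℕ) + 1 :=
    fun i j h => σ.injective (Fin.ext (by simpa using h))
  have hnew (i : Fin (ℓ - 1)) : (σ i : ℕ) + 1 ∉ s₀ := by
    have := (σ i).isLt
    simp only [s₀, Set.mem_insert_iff, Set.mem_Ici, not_or]
    omega
  have hall : s₀ ∪ Set.range (fun i : Fin (ℓ - 1) => (σ i : ℕ) + 1) = Set.univ := by
    refine Set.eq_univ_of_forall fun x => ?_
    by_cases hx : x = 0 ∨ ℓ ≤ x
    · exact Or.inl hx
    · refine Or.inr ⟨σ.symm ⟨x - 1, by omega⟩, ?_⟩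
      simp only [Equiv.apply_symm_apply]
      omega
  have hbase := cumType_one_eq_nth (n := n) (psum_zero m) fun _ hj =>
    (psum_eq_of_le htop hj).trans hn
  refine typeOf_eq_of_cumType_eq_psum hm0 fun j => ?_
  rw [cumType_mlqAct_of_eq_nth (psum_mono m) (psum_zero m) hs₀ (Set.mem_insert 0 _) hbase
    qs _ hinj hnew hqs, hall]
  simp

/-- The type of the word `q(1^n)` produced by a `σ`-twisted multiline queue `q` of type
`m` (with `ℓ` classes and `p_ℓ(m) = n`) is `m` itself. -/
theorem mlq_type {n ℓ : ℕ} [NeZero n] (hℓ : 1 ≤ ℓ) (m : ℕ → ℕ)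
    (hm0 : m 0 = 0) (htop : ∀ j, ℓ < j → m j = 0) (hn : psum m ℓ = n)
    (σ : Equiv.Perm (Fin (ℓ - 1))) (qs : Fin (ℓ - 1) → Finset (Fin n))
    (hqs : ∀ i, (qs i).card = psum m ((σ i : ℕ) + 1)) :
    typeOf (mlqAct qs (fun _ => 1)) = m :=
  mlq_type_general m hm0 htop hn σ qs hqs

end MLQ
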